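/- (Theorem 1 of the paper) Let the system be x(k+1)=Ax(k)+Bu(k), y(k)=Cx(k), Φ and Γ the standard prediction matrices and Φ_I, Γ_I the integral prediction matrices built from A_I=[[A,0],[CA,I]], B_I=[B;CB], C_I=[0,I]. For inputs u_0,...,u_{N−1} applied from state x_0 with previous accumulated input u_I(k−1) = Σ_{j=0}^{k−1} u(j), define [U_I]_i as the vector with blocks (Σ_{j=0}^{l} u_j) + u_I(k−1) for l = 0,...,i−1. Then for each i = 1,...,N: y_i = [Φ_I]_i x_I(0) + [Γ_I]_i [Δu_0; ...; Δu_{i−1}] = [Φ]_i x_0 + [Γ]_i [U_I]_i, where x_I(0) = [x_0 − x(k−1); y_0] and Δu_j denotes input increments. -/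

import Mathlib

/-!
Write `s` for the trajectory prefixed by the previous state, `s 0 = x(k-1)`, `s (j+1) = x_j`,
driven by the absolute inputs `u_j = u_I(k-1) + Σ_{l<j} Δu_l`. Differencing two consecutive steps
shows that the incremental state `z_j = [s_{j+1} - s_j; C s_{j+1}]` obeys the augmented recurrence
`z_{j+1} = A_I z_j + B_I Δu_j` with `z_0 = x_I(0)`, and `y_i = C_I z_i`. Both expressions for `y_i`
are then the closed-form solution of a linear recurrence, read through an output matrix.
-/

open Matrix

section LinearRecurrence

variable {ι κ ο : Type*} [Fintype ι] [DecidableEq ι] [Fintype κ]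

theorem eq_pow_mulVec_add_sum_of_recurrence (M : Matrix ι ι ℝ) (G : Matrix ι κ ℝ)
    (z : ℕ → ι → ℝ) (w : ℕ → κ → ℝ) (h : ∀ j, z (j + 1) = M *ᵥ z j + G *ᵥ w j) (i : ℕ) :
    z i = (M ^ i) *ᵥ z 0 + ∑ j ∈ Finset.range i, (M ^ (i - 1 - j) * G) *ᵥ w j := by
  induction i with
  | zero => simp
  | succ i ih =>
    have hpow : ∀ j ∈ Finset.range i, M *ᵥ ((M ^ (i - 1 - j) * G) *ᵥ w j)
        = (M ^ (i + 1 - 1 - j) * G) *ᵥ w j := by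
      intro j hj
      rw [mulVec_mulVec, ← Matrix.mul_assoc, ← pow_succ',
        show i - 1 - j + 1 = i + 1 - 1 - j by have := Finset.mem_range.mp hj; omega]
    rw [h, ih, mulVec_add, mulVec_mulVec, ← pow_succ', mulVec_sum, Finset.sum_congr rfl hpow,
      Finset.sum_range_succ, add_assoc]
    simp

theorem mulVec_eq_pow_mulVec_add_sum_of_recurrence (H : Matrix ο ι ℝ) (M : Matrix ι ι ℝ)
    (G : Matrix ι κ ℝ) (z : ℕ → ι → ℝ) (w : ℕ → κ → ℝ)
    (h : ∀ j, z (j + 1) = M *ᵥ z j + G *ᵥ w j) (i : ℕ) :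
    H *ᵥ z i = (H * M ^ i) *ᵥ z 0 + ∑ j ∈ Finset.range i, (H * M ^ (i - 1 - j) * G) *ᵥ w j := by
  simp only [eq_pow_mulVec_add_sum_of_recurrence M G z w h i, mulVec_add, mulVec_sum,
    mulVec_mulVec, Matrix.mul_assoc]

end LinearRecurrence

section IntegralModel

variable {n m q : Type*} [Fintype n] [Fintype m] [Fintype q] [DecidableEq q]
  (A : Matrix n n ℝ) (B : Matrix n m ℝ) (C : Matrix q n ℝ)

theorem integral_model_mulVec (v : n → ℝ) (w : q → ℝ) (d : m → ℝ) :
    fromBlocks A 0 (C * A) 1 *ᵥ Sum.elim v w + fromRows B (C * B) *ᵥ d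
      = Sum.elim (A *ᵥ v + B *ᵥ d) (C *ᵥ (A *ᵥ v + B *ᵥ d) + w) := by
  ext (r | r)
  · simp [fromBlocks_mulVec, fromRows_mulVec]
  · simp [fromBlocks_mulVec, fromRows_mulVec, mulVec_add, ← mulVec_mulVec]
    ring

theorem integral_model_step (s : ℕ → n → ℝ) (u : ℕ → m → ℝ)
    (hs : ∀ j, s (j + 1) = A *ᵥ s j + B *ᵥ u j) (j : ℕ) :
    Sum.elim (s (j + 2) - s (j + 1)) (C *ᵥ s (j + 2))
      = fromBlocks A 0 (C * A) 1 *ᵥ Sum.elim (s (j + 1) - s j) (C *ᵥ s (j + 1))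
        + fromRows B (C * B) *ᵥ (u (j + 1) - u j) := by
  have hdiff : A *ᵥ (s (j + 1) - s j) + B *ᵥ (u (j + 1) - u j) = s (j + 2) - s (j + 1) := by
    rw [hs (j + 1), hs j, mulVec_sub, mulVec_sub]
    abel
  rw [integral_model_mulVec, hdiff, mulVec_sub, sub_add_cancel]

end IntegralModel

/-- Theorem 1: for each i = 1,...,N,
y_i = [Φ_I]_i x_I(0) + [Γ_I]_i [Δu_0;...;Δu_{i−1}] = [Φ]_i x_0 + [Γ]_i [U_I]_i. -/
theorem integral_prediction_equivalence (n m q N : ℕ)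
    (A : Matrix (Fin n) (Fin n) ℝ) (B : Matrix (Fin n) (Fin m) ℝ)
    (C : Matrix (Fin q) (Fin n) ℝ)
    (xprev : Fin n → ℝ) (uI : Fin m → ℝ) (Δu : ℕ → Fin m → ℝ)
    (x : ℕ → Fin n → ℝ) (y : ℕ → Fin q → ℝ)
    (hx0 : x 0 = A.mulVec xprev + B.mulVec uI)
    (hx : ∀ j, x (j + 1) =
      A.mulVec (x j) + B.mulVec (uI + ∑ l ∈ Finset.range (j + 1), Δu l))
    (hy : ∀ j, y j = C.mulVec (x j))
    (xI0 : Fin n ⊕ Fin q → ℝ)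
    (hxI0 : xI0 = Sum.elim (x 0 - xprev) (y 0)) :
    ∀ i : ℕ, 1 ≤ i → i ≤ N →
      (y i = ((fromCols (0 : Matrix (Fin q) (Fin n) ℝ)
                (1 : Matrix (Fin q) (Fin q) ℝ))
              * (fromBlocks A 0 (C * A) (1 : Matrix (Fin q) (Fin q) ℝ)) ^ i).mulVec xI0
            + ∑ j ∈ Finset.range i,
              ((fromCols (0 : Matrix (Fin q) (Fin n) ℝ)
                  (1 : Matrix (Fin q) (Fin q) ℝ))
                * (fromBlocks A 0 (C * A) (1 : Matrix (Fin q) (Fin q) ℝ)) ^ (i - 1 - j)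
                * (fromRows B (C * B))).mulVec (Δu j))
      ∧ y i = (C * A ^ i).mulVec (x 0)
            + ∑ j ∈ Finset.range i,
              (C * A ^ (i - 1 - j) * B).mulVec
                (uI + ∑ l ∈ Finset.range (j + 1), Δu l) := by
  intro i _ _
  let s : ℕ → Fin n → ℝ := fun j => Nat.casesOn j xprev x
  let u : ℕ → Fin m → ℝ := fun j => uI + ∑ l ∈ Finset.range j, Δu l
  have hs : ∀ j, s (j + 1) = A *ᵥ s j + B *ᵥ u j
    | 0 => by simpa [s, u] using hx0
    | j + 1 => hx j
  have hz : ∀ j, Sum.elim (s (j + 1 + 1) - s (j + 1)) (C *ᵥ s (j + 1 + 1))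
      = fromBlocks A 0 (C * A) 1 *ᵥ Sum.elim (s (j + 1) - s j) (C *ᵥ s (j + 1))
        + fromRows B (C * B) *ᵥ Δu j := fun j => by
    simpa [u, Finset.sum_range_succ] using integral_model_step A B C s u hs j
  have hz0 : xI0 = Sum.elim (s 1 - s 0) (C *ᵥ s 1) := hxI0.trans (by rw [hy 0]; rfl)
  constructor
  · have hyz : y i = fromCols 0 1 *ᵥ Sum.elim (s (i + 1) - s i) (C *ᵥ s (i + 1)) := by
      rw [fromCols_mulVec_sumElim, hy]
      simp [s]
    rw [hyz, mulVec_eq_pow_mulVec_add_sum_of_recurrence _ _ _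
      (fun j => Sum.elim (s (j + 1) - s j) (C *ᵥ s (j + 1))) Δu hz, hz0]
    rfl
  · rw [hy, mulVec_eq_pow_mulVec_add_sum_of_recurrence C A B x _ hx]
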